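/- Let (Z_i)_{i∈Z} be i.i.d. regularly varying with index α ∈ (0,2), fix q ∈ N and real φ_0,...,φ_q satisfying 0 ≤ (Σ_{i=0}^s φ_i)/(Σ_{i=0}^q φ_i) ≤ 1 for all s = 0,...,q with β = Σ_{i=0}^q φ_i > 0, and let X_i = Σ_{j=0}^q φ_j Z_{i−j}. Define W_n(t) = a_n^{−1} ⋁_{i=1}^{⌊nt⌋} X_i and W_n^Z(t) = ⋁_{i=1}^{⌊nt⌋} (|Z_i|/a_n)(φ_+ 1_{{Z_i>0}} + φ_- 1_{{Z_i<0}}), where φ_+ = max{φ_j ∨ 0 : 0 ≤ j ≤ q}, φ_- = max{−φ_j ∨ 0 : 0 ≤ j ≤ q}. Then for every δ > 0, P(d_{M_2}(W_n^Z, W_n) > δ) → 0 as n → ∞. -/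

import Mathlib

/-!
Fix `ε > 0`, put `T = ε aₙ` and `S = Σⱼ |φⱼ|`. Outside an event of vanishing probability, the
values among `Z_{1-q}, …, Zₙ` with `|Zᵢ| > T` are more than `q` apart and avoid the first and
the last `q` positions, and `X₁ ≥ -T`. Then each `Xᵢ` is a single term `φⱼ Z_{i-j}` up to `S T`,
which is at most the weight of `Z_{i-j}`; conversely a large `Zᵢ` has weight `φⱼ Zᵢ` for the
coefficient realizing `φ₊` or `φ₋`, and this is `X_{i+j}` up to `S T`. Hence the two running
maxima dominate each other up to `(S + 1) T / aₙ` and a time shift of at most `q` steps, and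
for step functions this bounds the `M₂` distance by `max ((S + 1) ε) ((q + 1) / n)`.
The exceptional event has probability at most
`(n + q) q P(|Z| > T)² + 2 q P(|Z| > T) + P(X₁ < -T)`, which tends to `0` because
`n P(|Z| > ε aₙ) → ε^{-α}` by regular variation.
-/

open MeasureTheory Filter Topology Set ProbabilityTheory
open scoped ENNReal NNReal

noncomputable section

namespace LinProc

/-! ### Càdlàg paths on `[0,1]` and Skorohod `M₂` distances -/

/-- A function `f : ℝ → ℝ` is càdlàg on `[0,1]`: right-continuous on `[0,1)` and
with left limits on `(0,1]`. -/
def IsCadlag (f : ℝ → ℝ) : Prop :=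
  (∀ t ∈ Set.Ico (0:ℝ) 1, Filter.Tendsto f (nhdsWithin t (Set.Ioi t)) (nhds (f t))) ∧
  (∀ t ∈ Set.Ioc (0:ℝ) 1, ∃ l : ℝ, Filter.Tendsto f (nhdsWithin t (Set.Iio t)) (nhds l))

/-- The left limit `f(t-)`, with the convention `f(0-) = f 0`. -/
def llim (f : ℝ → ℝ) (t : ℝ) : ℝ :=
  if t ≤ 0 then f 0 else Function.leftLim f t

/-- The metric `d(a,b) = |a₁-b₁| ∨ |a₂-b₂|` on `ℝ²`. -/
def dRect (a b : ℝ × ℝ) : ℝ := max |a.1 - b.1| |a.2 - b.2|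

/-- The completed (thin) graph of `f` over `[0,1]`:
all points `(t, z)` with `t ∈ [0,1]` and `z` on the segment between `f(t-)` and `f(t)`. -/
def completedGraph (f : ℝ → ℝ) : Set (ℝ × ℝ) :=
  {p | p.1 ∈ Set.Icc (0:ℝ) 1 ∧
    ∃ lam ∈ Set.Icc (0:ℝ) 1, p.2 = lam * llim f p.1 + (1 - lam) * f p.1}

/-- One-sided Hausdorff gap between completed graphs. -/
def graphGap (f g : ℝ → ℝ) : ℝ :=
  sSup ((fun a => sInf (dRect a '' completedGraph g)) '' completedGraph f)

/-- The Skorohod `M₂` metric on `D([0,1],ℝ)`: the Hausdorff distance (w.r.t. `dRect`)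
between the completed graphs. -/
def dM2 (f g : ℝ → ℝ) : ℝ := max (graphGap f g) (graphGap g f)

/-- The metric `d_p` inducing the weak `M₂` (product) topology on `D([0,1],ℝ²)`,
where an element of `D([0,1],ℝ²)` is recorded as a pair of real càdlàg functions. -/
def dProd (x y : (ℝ → ℝ) × (ℝ → ℝ)) : ℝ := max (dM2 x.1 y.1) (dM2 x.2 y.2)

/-! ### Convergence in distribution w.r.t. a distance function -/

/-- Convergence in distribution, along a filter `l`, of random elements of a space `S`
equipped with a distance function `d` : tested against all bounded functions `F : S → ℝ`
that are continuous with respect to `d` (measurability of the compositions is required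
so that the integrals are meaningful). -/
def TendstoInDistr {ι Ω Ω' S : Type*} [MeasurableSpace Ω] [MeasurableSpace Ω']
    (l : Filter ι) (P : Measure Ω) (P' : Measure Ω') (d : S → S → ℝ)
    (X : ι → Ω → S) (Y : Ω' → S) : Prop :=
  ∀ F : S → ℝ, (∃ C : ℝ, ∀ s, |F s| ≤ C) →
    (∀ s : S, ∀ ε > (0:ℝ), ∃ δ > (0:ℝ), ∀ s', d s s' < δ → |F s' - F s| < ε) →
    (∀ i, AEStronglyMeasurable (fun ω => F (X i ω)) P) →
    AEStronglyMeasurable (fun ω => F (Y ω)) P' →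
    Filter.Tendsto (fun i => ∫ ω, F (X i ω) ∂P) l (𝓝 (∫ ω, F (Y ω) ∂P'))

/-! ### Regular variation -/

/-- `L` is slowly varying at `∞`. -/
def SlowlyVarying (L : ℝ → ℝ) : Prop :=
  (∀ᶠ x in atTop, 0 < L x) ∧
    ∀ c > (0:ℝ), Filter.Tendsto (fun x => L (c * x) / L x) atTop (𝓝 1)

/-- `Z` has a regularly varying (two-sided) tail with index `α`:
`P(|Z| > x) = x^{-α} L(x)` for a slowly varying `L`. -/
def RegVarAbs {Ω : Type*} [MeasurableSpace Ω] (P : Measure Ω) (Z : Ω → ℝ) (α : ℝ) : Prop :=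
  0 < α ∧ ∃ L : ℝ → ℝ, SlowlyVarying L ∧
    ∀ x > (0:ℝ), (P {ω | x < |Z ω|}).toReal = x ^ (-α) * L x

/-- `Z` is regularly varying with index `α` and tail balance parameters `p`, `r`. -/
def RegVar {Ω : Type*} [MeasurableSpace Ω] (P : Measure Ω) (Z : Ω → ℝ)
    (α p r : ℝ) : Prop :=
  RegVarAbs P Z α ∧
    Filter.Tendsto
      (fun x : ℝ => (P {ω | x < Z ω}).toReal / (P {ω | x < |Z ω|}).toReal)
      atTop (𝓝 p) ∧
    Filter.Tendsto
      (fun x : ℝ => (P {ω | Z ω ≤ -x}).toReal / (P {ω | x < |Z ω|}).toReal)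
      atTop (𝓝 r)

/-- The normalizing sequence `(aₙ)`: positive with `n P(|Z| > aₙ) → 1`. -/
def NormSeq {Ω : Type*} [MeasurableSpace Ω] (P : Measure Ω) (Z : Ω → ℝ) (a : ℕ → ℝ) : Prop :=
  (∀ n, 0 < a n) ∧
    Filter.Tendsto (fun n : ℕ => (n : ℝ) * (P {ω | a n < |Z ω|}).toReal) atTop (𝓝 1)

/-- An i.i.d. family of real random variables. -/
def IID {Ω ι : Type*} [MeasurableSpace Ω] (P : Measure Ω) (Z : ι → Ω → ℝ) : Prop :=
  (∀ i, Measurable (Z i)) ∧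
    ProbabilityTheory.iIndepFun (m := fun _ => Real.measurableSpace) Z P ∧
    ∀ i j, P.map (Z i) = P.map (Z j)

/-- `Z` is symmetric: `Z` and `-Z` have the same law. -/
def Symmetric' {Ω : Type*} [MeasurableSpace Ω] (P : Measure Ω) (Z : Ω → ℝ) : Prop :=
  P.map Z = P.map (fun ω => -(Z ω))

/-! ### The limit measures -/

/-- The Lévy measure `μ(dx) = (p 1_{(0,∞)}(x) + r 1_{(-∞,0)}(x)) α |x|^{-α-1} dx`. -/
def levyMeasure (α p r : ℝ) : Measure ℝ :=
  volume.withDensity fun x =>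
    ENNReal.ofReal ((if 0 < x then p else if x < 0 then r else 0) * α * |x| ^ (-α - 1))

/-- The exponent measure `ν(dx) = (φ₊^α p + φ₋^α r) α x^{-α-1} 1_{(0,∞)}(x) dx`. -/
def extremalMeasure (α p r φp φm : ℝ) : Measure ℝ :=
  volume.withDensity fun x =>
    ENNReal.ofReal (if 0 < x then (φp ^ α * p + φm ^ α * r) * α * x ^ (-α - 1) else 0)

/-! ### Lévy processes and extremal processes on `[0,1]` -/

/-- `V` is a Lévy process on `[0,1]` with characteristic triple `(0, ν, b)`. -/
structure IsLevy {Ω : Type*} [MeasurableSpace Ω] (P : Measure Ω) (V : Ω → ℝ → ℝ)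
    (ν : Measure ℝ) (b : ℝ) : Prop where
  meas : ∀ t, Measurable fun ω => V ω t
  start : ∀ᵐ ω ∂P, V ω 0 = 0
  cadlag : ∀ᵐ ω ∂P, IsCadlag (V ω)
  indepIncr : ∀ (n : ℕ) (t : Fin (n+1) → ℝ), Monotone t →
    (∀ i, t i ∈ Set.Icc (0:ℝ) 1) →
    ProbabilityTheory.iIndepFun (m := fun _ => Real.measurableSpace)
      (fun i : Fin n => fun ω => V ω (t i.succ) - V ω (t i.castSucc)) P
  statIncr : ∀ s t : ℝ, 0 ≤ s → s ≤ t → t ≤ 1 →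
    P.map (fun ω => V ω t - V ω s) = P.map (fun ω => V ω (t - s))
  charFun : ∀ t ∈ Set.Icc (0:ℝ) 1, ∀ z : ℝ,
    ∫ ω, Complex.exp (Complex.I * z * V ω t) ∂P =
      Complex.exp (t * (Complex.I * b * z +
        ∫ x : ℝ, (Complex.exp (Complex.I * z * x) - 1 -
          Complex.I * z * x * Set.indicator (Set.Icc (-1:ℝ) 1) (fun _ => (1:ℂ)) x) ∂ν))

/-- `W` is an extremal process on `[0,1]` with exponent measure `ν`: its finite-dimensional
distributions are `P(W(t₁) ≤ x₁, …, W(t_k) ≤ x_k)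
 = ∏ᵢ exp(-(tᵢ - tᵢ₋₁) ν(minⱼ≥ᵢ xⱼ, ∞))` for `0 < t₁ < ⋯ < t_k ≤ 1` and `xᵢ > 0`. -/
structure IsExtremal {Ω : Type*} [MeasurableSpace Ω] (P : Measure Ω) (W : Ω → ℝ → ℝ)
    (ν : Measure ℝ) : Prop where
  meas : ∀ t, Measurable fun ω => W ω t
  fdd : ∀ (k : ℕ) (t x : Fin (k+1) → ℝ), StrictMono t → 0 < t 0 → t (Fin.last k) ≤ 1 →
    (∀ i, 0 < x i) →
    P {ω | ∀ i, W ω (t i) ≤ x i} =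
      ENNReal.ofReal (Real.exp (-(∑ i : Fin (k+1),
        (t i - if h : i = 0 then 0 else t (Fin.castSucc (i.pred h))) *
          (ν (Set.Ioi (sInf (x '' {j | i ≤ j})))).toReal)))

/-! ### Poisson point processes on `[0,1] × (ℝ \ {0})` -/

/-- The number of points of the family `pts` lying in `A` (in `ℝ≥0∞`). -/
def ptCount (pts : ℕ → ℝ × ℝ) (A : Set (ℝ × ℝ)) : ℝ≥0∞ :=
  ∑' i, A.indicator (fun _ => (1:ℝ≥0∞)) (pts i)

/-- `pts` is a Poisson point process with (σ-finite, atomless on single points) intensity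
measure `m`: counts of disjoint sets are independent, and the count of any set of finite
intensity is Poisson distributed. -/
def IsPoissonPP {Ω : Type*} [MeasurableSpace Ω] (P : Measure Ω)
    (pts : Ω → ℕ → ℝ × ℝ) (m : Measure (ℝ × ℝ)) : Prop :=
  (∀ i, Measurable fun ω => pts ω i) ∧
  (∀ A : Set (ℝ × ℝ), MeasurableSet A → m A ≠ ∞ → ∀ k : ℕ,
    P {ω | ptCount (pts ω) A = k} =
      ENNReal.ofReal (Real.exp (-(m A).toReal) * (m A).toReal ^ k / (Nat.factorial k))) ∧
  (∀ (n : ℕ) (A : Fin n → Set (ℝ × ℝ)), (∀ i, MeasurableSet (A i)) →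
    Pairwise (Function.onFun Disjoint A) →
    ProbabilityTheory.iIndepFun (m := fun _ => inferInstance)
      (fun i ω => ptCount (pts ω) (A i)) P)

/-- The weight `|x| (φ₊ 1_{x>0} + φ₋ 1_{x<0})`. -/
def wt (φp φm : ℝ) (x : ℝ) : ℝ := |x| * (if 0 < x then φp else if x < 0 then φm else 0)

/-- First component of the sum–maximum functional of a point family:
`β Σ_{tᵢ ≤ t} xᵢ 1_{u < |xᵢ|}`. -/
def ppSum (β u : ℝ) (pts : ℕ → ℝ × ℝ) (t : ℝ) : ℝ :=
  β * ∑' i, if (pts i).1 ≤ t ∧ u < |(pts i).2| then (pts i).2 else 0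

/-- Second component of the sum–maximum functional:
`⋁_{tᵢ ≤ t} |xᵢ| (φ₊ 1_{xᵢ>0} + φ₋ 1_{xᵢ<0})`, with `sup ∅ = 0`. -/
def ppMax (φp φm : ℝ) (pts : ℕ → ℝ × ℝ) (t : ℝ) : ℝ :=
  sSup (insert 0 {v | ∃ i, (pts i).1 ≤ t ∧ v = wt φp φm (pts i).2})

/-! ### Partial sum and partial maxima processes -/

/-- Partial-sum process `t ↦ (Σ_{i=1}^{⌊nt⌋} Y_i - ⌊nt⌋ b) / a`. -/
def sumProc (a b : ℝ) (Y : ℕ → ℝ) (n : ℕ) (t : ℝ) : ℝ :=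
  ((∑ i ∈ Finset.range ⌊(n:ℝ) * t⌋₊, Y (i+1)) - (⌊(n:ℝ) * t⌋₊ : ℝ) * b) / a

/-- Partial-maxima process `t ↦ (⋁_{i=1}^{⌊nt⌋} Y_i) / a` (with value `0` for `⌊nt⌋ = 0`). -/
def maxProc (a : ℝ) (Y : ℕ → ℝ) (n : ℕ) (t : ℝ) : ℝ :=
  if h : ⌊(n:ℝ) * t⌋₊ = 0 then 0 else
    ((Finset.range ⌊(n:ℝ) * t⌋₊).sup' (Finset.nonempty_range_iff.mpr h)
      (fun i => Y (i+1))) / a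

/-- `φ₊ = max{φⱼ ∨ 0 : 0 ≤ j ≤ q}` for finitely many coefficients. -/
def phiPlusFin (q : ℕ) (φ : ℕ → ℝ) : ℝ :=
  (Finset.range (q+1)).sup' (Finset.nonempty_range_iff.mpr (Nat.succ_ne_zero q))
    fun j => max (φ j) 0

/-- `φ₋ = max{-φⱼ ∨ 0 : 0 ≤ j ≤ q}` for finitely many coefficients. -/
def phiMinusFin (q : ℕ) (φ : ℕ → ℝ) : ℝ :=
  (Finset.range (q+1)).sup' (Finset.nonempty_range_iff.mpr (Nat.succ_ne_zero q))
    fun j => max (-φ j) 0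

/-- `φ₊ = sup{φⱼ ∨ 0 : j ≥ 0}`. -/
def phiPlus (φ : ℕ → ℝ) : ℝ := ⨆ j : ℕ, max (φ j) 0

/-- `φ₋ = sup{-φⱼ ∨ 0 : j ≥ 0}`. -/
def phiMinus (φ : ℕ → ℝ) : ℝ := ⨆ j : ℕ, max (-φ j) 0



/-! ### Radon point measures on `[0,1] × E`, `E = [-∞,∞] \ {0}` -/

/-- The point measure `Σᵢ δ_{pᵢ}` associated with a family of optional points in
`[0,1] × [-∞,∞]` (unused indices carry `none`). -/
def pmMeasure (pts : ℕ → Option (ℝ × EReal)) : Measure (ℝ × EReal) :=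
  Measure.sum fun i => (pts i).elim 0 fun p => Measure.dirac p

/-- The points of `pts` lie in `[0,1] × E`, `E = [-∞,∞] \ {0}`. -/
def pmSupported (pts : ℕ → Option (ℝ × EReal)) : Prop :=
  ∀ i p, pts i = some p → p.1 ∈ Set.Icc (0:ℝ) 1 ∧ p.2 ≠ 0

/-- Radon property: only finitely many points outside every neighbourhood `(-δ,δ)` of `0`. -/
def pmRadon (pts : ℕ → Option (ℝ × EReal)) : Prop :=
  ∀ δ : ℝ, 0 < δ →
    {i : ℕ | ∃ p, pts i = some p ∧ (p.2 ≤ -(δ:EReal) ∨ (δ:EReal) ≤ p.2)}.Finite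

/-- Vague convergence of the point measures on `[0,1] × E`: convergence of integrals of
continuous functions vanishing on a neighbourhood of `{x = 0}` (such functions have
compactly contained support in `[0,1] × E`). -/
def VagueTendsto (pm : ℕ → (ℕ → Option (ℝ × EReal))) (pm0 : ℕ → Option (ℝ × EReal)) : Prop :=
  ∀ f : ℝ × EReal → ℝ, Continuous f →
    (∃ δ : ℝ, 0 < δ ∧ ∀ p : ℝ × EReal, -(δ:EReal) < p.2 → p.2 < (δ:EReal) → f p = 0) →
    Filter.Tendsto (fun n => ∫ p, f p ∂(pmMeasure (pm n))) atTop
      (𝓝 (∫ p, f p ∂(pmMeasure pm0)))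

/-- The weight `|x| (φ₊ 1_{x>0} + φ₋ 1_{x<0})` for `x ∈ [-∞,∞]` (real value; by convention
the weight of an infinite point is `0`). -/
def wtE (φp φm : ℝ) (x : EReal) : ℝ :=
  (if 0 < x then φp else if x < 0 then φm else 0) * |x.toReal|

/-- `Φ^{(u)}` first component: `β Σ_{tᵢ ≤ t} xᵢ 1_{u < |xᵢ| < ∞}`. -/
def phiSumE (β u : ℝ) (pts : ℕ → Option (ℝ × EReal)) (t : ℝ) : ℝ :=
  β * ∑' i, (pts i).elim 0 fun p =>
    if p.1 ≤ t ∧ ((u:EReal) < p.2 ∨ p.2 < -(u:EReal)) ∧ p.2 ≠ ⊤ ∧ p.2 ≠ ⊥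
    then p.2.toReal else 0

/-- `Φ^{(u)}` second component: `⋁_{tᵢ ≤ t} |xᵢ| (φ₊ 1_{xᵢ>0} + φ₋ 1_{xᵢ<0})`, `sup ∅ = 0`. -/
def phiMaxE (φp φm : ℝ) (pts : ℕ → Option (ℝ × EReal)) (t : ℝ) : ℝ :=
  sSup (insert 0 {v | ∃ i p, pts i = some p ∧ p.1 ≤ t ∧ v = wtE φp φm p.2})

/-! ### The `M₁` oscillation function and the metric `d_{M₁}^*` -/

/-- The oscillation `ω(x,δ) = sup_{t} sup_{0∨(t-δ) ≤ t₁<t₂<t₃ ≤ (t+δ)∧1}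
‖x(t₂) - [x(t₁),x(t₃)]‖`. -/
def osc (x : ℝ → ℝ) (δ : ℝ) : ℝ :=
  sSup (insert 0 {v | ∃ t ∈ Set.Icc (0:ℝ) 1, ∃ t₁ t₂ t₃ : ℝ,
    max 0 (t - δ) ≤ t₁ ∧ t₁ < t₂ ∧ t₂ < t₃ ∧ t₃ ≤ min (t + δ) 1 ∧
    v = Metric.infDist (x t₂) (Set.uIcc (x t₁) (x t₃))})

/-- `ω̂(x,z) = ω(x, e^z)` for `z < 0` and `ω(x,1)` for `z ≥ 0`. -/
def oscHat (x : ℝ → ℝ) (z : ℝ) : ℝ :=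
  if z < 0 then osc x (Real.exp z) else osc x 1

/-- The Lévy metric `λ(F₁,F₂) = inf{ε > 0 : F₂(y-ε) - ε ≤ F₁(y) ≤ F₂(y+ε) + ε ∀y}`. -/
def levyMetric (F G : ℝ → ℝ) : ℝ :=
  sInf {ε : ℝ | 0 < ε ∧ ∀ y : ℝ, G (y - ε) - ε ≤ F y ∧ F y ≤ G (y + ε) + ε}


/-- The complete metric `d_{M₁}^*(x₁,x₂) = d_{M₂}(x₁,x₂) + λ(ω̂(x₁,·), ω̂(x₂,·))`,
topologically equivalent to the Skorohod `M₁` metric. -/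
def dM1star (f g : ℝ → ℝ) : ℝ := dM2 f g + levyMetric (oscHat f) (oscHat g)

/-- The metric `d_p^*` : `M₂` on the first coordinate, `M₁` on the second. -/
def dProdStar (x y : (ℝ → ℝ) × (ℝ → ℝ)) : ℝ := max (dM2 x.1 y.1) (dM1star x.2 y.2)

lemma mem_uIcc_iff_exists_convex {a b z : ℝ} :
    z ∈ uIcc a b ↔ ∃ lam ∈ Icc (0:ℝ) 1, z = lam * a + (1 - lam) * b := by
  rw [uIcc_comm, ← segment_eq_uIcc, segment_eq_image]
  simp only [mem_image, smul_eq_mul]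
  exact exists_congr fun lam => and_congr_right' (by constructor <;> intro h <;> linarith)

lemma exists_mem_uIcc_abs_sub_le {a b z C : ℝ} (hC : 0 ≤ C) (hlow : min a b - C ≤ z)
    (hhigh : z ≤ max a b + C) : ∃ z' ∈ uIcc a b, |z - z'| ≤ C := by
  refine ⟨max (min a b) (min z (max a b)),
    ⟨le_max_left _ _, max_le min_le_max (min_le_right _ _)⟩, ?_⟩
  rw [abs_le]
  constructor <;> rcases max_cases (min a b) (min z (max a b)) with h | h <;>
    rcases min_cases z (max a b) with h' | h' <;> linarith

lemma natCast_ceil_sub_one_le {x : ℝ} (hx : 0 ≤ x) : ((⌈x⌉₊ - 1 : ℕ) : ℝ) ≤ x := by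
  rcases Nat.eq_zero_or_pos ⌈x⌉₊ with h | h
  · simp [h, hx]
  · rw [Nat.cast_sub h, Nat.cast_one]
    linarith [Nat.ceil_lt_add_one hx]

lemma le_natCast_ceil_sub_one_add_one (x : ℝ) : x ≤ ((⌈x⌉₊ - 1 : ℕ) : ℝ) + 1 := by
  have : (⌈x⌉₊ : ℝ) ≤ ((⌈x⌉₊ - 1 : ℕ) : ℝ) + 1 := by exact_mod_cast le_tsub_add
  linarith [Nat.le_ceil x]

section stepFunction

variable {n : ℕ} {F G : ℕ → ℝ}

lemma leftLim_comp_floor (hn : 0 < n) {t : ℝ} (ht : 0 < t) :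
    Function.leftLim (fun s => F ⌊(n:ℝ) * s⌋₊) t = F (⌈(n:ℝ) * t⌉₊ - 1) := by
  have hn' : (0:ℝ) < n := by exact_mod_cast hn
  set c := ⌈(n:ℝ) * t⌉₊
  have hc : 0 < c := Nat.ceil_pos.2 (by positivity)
  have hc_cast : ((c - 1 : ℕ) : ℝ) = c - 1 := by rw [Nat.cast_sub hc, Nat.cast_one]
  have hlt : ((c - 1 : ℕ) : ℝ) < n * t := by
    rw [hc_cast]; linarith [Nat.ceil_lt_add_one (show 0 ≤ (n:ℝ) * t by positivity)]
  refine leftLim_eq_of_tendsto (tendsto_const_nhds.congr' ?_)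
  filter_upwards [Ioo_mem_nhdsLT ((div_lt_iff₀' hn').2 hlt)] with s hs
  have h1 : ((c - 1 : ℕ) : ℝ) < n * s := (div_lt_iff₀' hn').1 hs.1
  have h2 : (n:ℝ) * s < c := (mul_lt_mul_of_pos_left hs.2 hn').trans_le (Nat.le_ceil _)
  congr 1
  rw [eq_comm, Nat.floor_eq_iff ((Nat.cast_nonneg _).trans h1.le)]
  exact ⟨h1.le, by rw [hc_cast]; linarith⟩

lemma llim_comp_floor (hn : 0 < n) {t : ℝ} (ht : 0 ≤ t) :
    llim (fun s => F ⌊(n:ℝ) * s⌋₊) t = F (⌈(n:ℝ) * t⌉₊ - 1) := by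
  rcases ht.eq_or_lt with rfl | ht
  · simp [llim]
  · rw [llim, if_neg ht.not_ge, leftLim_comp_floor hn ht]

lemma mem_completedGraph_comp_floor (hn : 0 < n) {t z : ℝ} :
    (t, z) ∈ completedGraph (fun s => F ⌊(n:ℝ) * s⌋₊) ↔
      t ∈ Icc (0:ℝ) 1 ∧ z ∈ uIcc (F (⌈(n:ℝ) * t⌉₊ - 1)) (F ⌊(n:ℝ) * t⌋₊) := by
  refine and_congr_right fun ht => ?_
  rw [llim_comp_floor hn ht.1, mem_uIcc_iff_exists_convex]

lemma natCast_div_mem_completedGraph (hn : 0 < n) {j : ℕ} (hj : j ≤ n) {z : ℝ}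
    (hz : z ∈ uIcc (F (j - 1)) (F j)) :
    ((j:ℝ) / n, z) ∈ completedGraph (fun s => F ⌊(n:ℝ) * s⌋₊) := by
  have hn' : (0:ℝ) < n := by exact_mod_cast hn
  have hnj : (n:ℝ) * (j / n) = j := by field_simp
  rw [mem_completedGraph_comp_floor hn, hnj, Nat.ceil_natCast, Nat.floor_natCast]
  exact ⟨⟨by positivity, (div_le_one hn').2 (by exact_mod_cast hj)⟩, hz⟩

lemma exists_natCast_div_mem_completedGraph (hn : 0 < n) {j₀ j₁ : ℕ} (hj : j₀ ≤ j₁)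
    (hj₁ : j₁ ≤ n) {z : ℝ} (hz : z ∈ uIcc (F j₀) (F j₁)) :
    ∃ j, j₀ ≤ j ∧ j ≤ j₁ ∧ ((j:ℝ) / n, z) ∈ completedGraph (fun s => F ⌊(n:ℝ) * s⌋₊) := by
  induction j₁, hj using Nat.le_induction generalizing z with
  | base =>
    rw [uIcc_self, mem_singleton_iff] at hz
    exact ⟨j₀, le_rfl, le_rfl, natCast_div_mem_completedGraph hn hj₁ (hz ▸ right_mem_uIcc)⟩
  | succ j₁ hj ih =>
    rcases uIcc_subset_uIcc_union_uIcc hz with hz | hz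
    · obtain ⟨j, h₀, h₁, hmem⟩ := ih (by omega) hz
      exact ⟨j, h₀, by omega, hmem⟩
    · exact ⟨j₁ + 1, by omega, le_rfl, natCast_div_mem_completedGraph hn hj₁ hz⟩

lemma graphGap_le {f g : ℝ → ℝ} {D : ℝ} (hD : 0 ≤ D)
    (h : ∀ p ∈ completedGraph f, ∃ b ∈ completedGraph g, dRect p b ≤ D) :
    graphGap f g ≤ D := by
  refine Real.sSup_le ?_ hD
  rintro x ⟨p, hp, rfl⟩
  obtain ⟨b, hb, hpb⟩ := h p hp
  refine csInf_le_of_le ⟨0, ?_⟩ ⟨b, hb, rfl⟩ hpb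
  rintro y ⟨c, -, rfl⟩
  exact le_max_of_le_left (abs_nonneg _)

lemma graphGap_comp_floor_le (hn : 0 < n) {C h : ℝ} (hC : 0 ≤ C)
    (hcover : ∀ t ∈ Icc (0:ℝ) 1, ∀ z ∈ uIcc (F (⌈(n:ℝ) * t⌉₊ - 1)) (F ⌊(n:ℝ) * t⌋₊),
      ∃ jl jr : ℕ, jl ≤ jr ∧ jr ≤ n ∧ |n * t - jl| ≤ h ∧ |n * t - jr| ≤ h ∧
        min (G jl) (G jr) - C ≤ z ∧ z ≤ max (G jl) (G jr) + C) :
    graphGap (fun s => F ⌊(n:ℝ) * s⌋₊) (fun s => G ⌊(n:ℝ) * s⌋₊) ≤ max C (h / n) := by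
  have hn' : (0:ℝ) < n := by exact_mod_cast hn
  refine graphGap_le (le_max_of_le_left hC) ?_
  rintro ⟨t, z⟩ hp
  obtain ⟨ht, hz⟩ := (mem_completedGraph_comp_floor hn).1 hp
  obtain ⟨jl, jr, hjlr, hjr, hl, hr, hlow, hhigh⟩ := hcover t ht z hz
  -- move `z` into `uIcc (G jl) (G jr)`, which the completed graph of `G` covers over `[jl/n, jr/n]`
  obtain ⟨z', hz', hzz'⟩ := exists_mem_uIcc_abs_sub_le hC hlow hhigh
  obtain ⟨j, hjl, hjr', hmem⟩ := exists_natCast_div_mem_completedGraph hn hjlr hjr hz'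
  refine ⟨_, hmem, max_le (le_max_of_le_right ?_) (le_max_of_le_left hzz')⟩
  have hj : |n * t - j| ≤ h := by
    have : (jl:ℝ) ≤ j := by exact_mod_cast hjl
    have : (j:ℝ) ≤ jr := by exact_mod_cast hjr'
    rw [abs_le] at hl hr ⊢
    constructor <;> linarith
  have hdiff : t - j / n = (n * t - j) / n := by field_simp
  change |t - j / n| ≤ h / n
  rw [hdiff, abs_div, abs_of_pos hn']
  exact div_le_div_of_nonneg_right hj hn'.le

lemma floor_natCast_mul_le {t : ℝ} (ht : t ∈ Icc (0:ℝ) 1) : ⌊(n:ℝ) * t⌋₊ ≤ n :=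
  Nat.floor_le_of_le (mul_le_of_le_one_right (Nat.cast_nonneg n) ht.2)

lemma graphGap_comp_floor_monotone_le (hn : 0 < n) (q : ℕ) {C : ℝ} (hC : 0 ≤ C)
    (hF : Monotone F) (hGF : ∀ k ≤ n, G k ≤ F k + C)
    (hFG : ∀ k ≤ n, F k ≤ G (min (k + q) n) + C) :
    graphGap (fun s => F ⌊(n:ℝ) * s⌋₊) (fun s => G ⌊(n:ℝ) * s⌋₊) ≤ max C ((q + 1) / n) := by
  refine graphGap_comp_floor_le hn hC fun t ht z hz => ?_
  set k := ⌊(n:ℝ) * t⌋₊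
  set k' := ⌈(n:ℝ) * t⌉₊ - 1
  have hnt : 0 ≤ (n:ℝ) * t := mul_nonneg (Nat.cast_nonneg n) ht.1
  have hkn : k ≤ n := floor_natCast_mul_le ht
  have hk'k : k' ≤ k := by have := Nat.ceil_le_floor_add_one ((n:ℝ) * t); omega
  rw [uIcc_of_le (hF hk'k)] at hz
  refine ⟨k', min (k + q) n, by omega, min_le_right _ _, ?_, ?_, ?_, ?_⟩
  · rw [abs_le]
    constructor <;>
      linarith [natCast_ceil_sub_one_le hnt, le_natCast_ceil_sub_one_add_one ((n:ℝ) * t)]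
  · have hk : (k:ℝ) ≤ n * t := Nat.floor_le hnt
    have hk' : (n:ℝ) * t < k + 1 := Nat.lt_floor_add_one _
    have hnt1 : (n:ℝ) * t ≤ n := mul_le_of_le_one_right (Nat.cast_nonneg n) ht.2
    rcases min_cases (k + q) n with ⟨h, hle⟩ | ⟨h, hlt⟩ <;> rw [h, abs_le]
    · push_cast; constructor <;> linarith
    · have : (n:ℝ) < k + q := by exact_mod_cast hlt
      constructor <;> linarith
  · linarith [min_le_left (G k') (G (min (k + q) n)), hGF k' (hk'k.trans hkn), hz.1]
  · linarith [le_max_right (G k') (G (min (k + q) n)), hFG k hkn, hz.2]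

lemma graphGap_comp_floor_le_monotone (hn : 0 < n) (q : ℕ) {C : ℝ} (hC : 0 ≤ C)
    (hF0 : F 0 = 0) (hF : Monotone F) (hG : MonotoneOn G (Ici 1)) (hGlb : ∀ k, -C ≤ G k)
    (hGF : ∀ k ≤ n, G k ≤ F k + C) (hFG : ∀ k ≤ n, F k ≤ G (min (k + q) n) + C) :
    graphGap (fun s => G ⌊(n:ℝ) * s⌋₊) (fun s => F ⌊(n:ℝ) * s⌋₊) ≤ max C ((q + 1) / n) := by
  refine graphGap_comp_floor_le hn hC fun t ht z hz => ?_
  set k := ⌊(n:ℝ) * t⌋₊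
  set k' := ⌈(n:ℝ) * t⌉₊ - 1
  have hnt : 0 ≤ (n:ℝ) * t := mul_nonneg (Nat.cast_nonneg n) ht.1
  have hkn : k ≤ n := floor_natCast_mul_le ht
  have hk'k : k' ≤ k := by have := Nat.ceil_le_floor_add_one ((n:ℝ) * t); omega
  have hk'lo := natCast_ceil_sub_one_le hnt
  have hk'hi := le_natCast_ceil_sub_one_add_one ((n:ℝ) * t)
  have hjl : k' - q ≤ k := (k'.sub_le q).trans hk'k
  refine ⟨k' - q, k, hjl, hkn, ?_, ?_, ?_, ?_⟩
  · have : (k':ℝ) - q ≤ ((k' - q : ℕ) : ℝ) := by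
      rw [sub_le_iff_le_add]; exact_mod_cast (show k' ≤ k' - q + q by omega)
    have : ((k' - q : ℕ) : ℝ) ≤ k' := by exact_mod_cast k'.sub_le q
    rw [abs_le]; constructor <;> linarith
  · rw [abs_le]; constructor <;> linarith [Nat.floor_le hnt, Nat.lt_floor_add_one ((n:ℝ) * t)]
  · rw [min_eq_left (hF hjl)]
    rcases Nat.eq_zero_or_pos (k' - q) with hq0 | hqpos
    · rw [hq0, hF0, zero_sub]
      exact (le_min (hGlb k') (hGlb k)).trans hz.1
    · have hGk' : G k' ≤ G k := hG (show 1 ≤ k' by omega) (show 1 ≤ k by omega) hk'k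
      have := hFG (k' - q) (by omega)
      rw [Nat.sub_add_cancel (by omega), min_eq_left (hk'k.trans hkn)] at this
      rw [uIcc_of_le hGk'] at hz
      linarith [hz.1]
  · rw [max_eq_right (hF hjl)]
    have := hGF k' (hk'k.trans hkn)
    have := hGF k hkn
    have := hF hk'k
    rcases Set.mem_uIcc.1 hz with h | h <;> linarith [h.2]

lemma dM2_comp_floor_le (hn : 0 < n) (q : ℕ) {C : ℝ} (hC : 0 ≤ C)
    (hF0 : F 0 = 0) (hF : Monotone F) (hG : MonotoneOn G (Ici 1)) (hGlb : ∀ k, -C ≤ G k)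
    (hGF : ∀ k ≤ n, G k ≤ F k + C) (hFG : ∀ k ≤ n, F k ≤ G (min (k + q) n) + C) :
    dM2 (fun s => F ⌊(n:ℝ) * s⌋₊) (fun s => G ⌊(n:ℝ) * s⌋₊) ≤ max C ((q + 1) / n) :=
  max_le (graphGap_comp_floor_monotone_le hn q hC hF hGF hFG)
    (graphGap_comp_floor_le_monotone hn q hC hF0 hF hG hGlb hGF hFG)

end stepFunction

def partialMax (a : ℝ) (Y : ℕ → ℝ) (k : ℕ) : ℝ :=
  if h : k = 0 then 0 else
    ((Finset.range k).sup' (Finset.nonempty_range_iff.mpr h) fun i => Y (i + 1)) / a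

lemma maxProc_eq_partialMax (a : ℝ) (Y : ℕ → ℝ) (n : ℕ) :
    maxProc a Y n = fun t => partialMax a Y ⌊(n:ℝ) * t⌋₊ := rfl

section partialMax

variable {a K : ℝ} {Y Y' : ℕ → ℝ}

@[simp] lemma partialMax_zero : partialMax a Y 0 = 0 := dif_pos rfl

lemma le_mul_partialMax (ha : 0 < a) {i k : ℕ} (hi : 1 ≤ i) (hik : i ≤ k) :
    Y i ≤ a * partialMax a Y k := by
  rw [partialMax, dif_neg (by omega), mul_div_cancel₀ _ ha.ne']
  obtain ⟨i, rfl⟩ : ∃ i', i = i' + 1 := ⟨i - 1, by omega⟩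
  exact Finset.le_sup' (fun i => Y (i + 1)) (Finset.mem_range.2 (by omega))

lemma partialMax_le_add (ha : 0 < a) {k l : ℕ} (hk : k ≠ 0)
    (h : ∀ i, 1 ≤ i → i ≤ k → ∃ m, 1 ≤ m ∧ m ≤ l ∧ Y i ≤ Y' m + K) :
    partialMax a Y k ≤ partialMax a Y' l + K / a := by
  rw [partialMax, dif_neg hk, div_le_iff₀ ha, add_mul, div_mul_cancel₀ _ ha.ne', mul_comm]
  refine Finset.sup'_le _ _ fun i hi => ?_
  obtain ⟨m, hm1, hml, hY⟩ := h (i + 1) (by omega) (Finset.mem_range.1 hi)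
  linarith [le_mul_partialMax (Y := Y') ha hm1 hml]

lemma monotoneOn_partialMax (ha : 0 < a) : MonotoneOn (partialMax a Y) (Ici 1) := by
  intro k hk l hl hkl
  have hk : k ≠ 0 := by simp only [mem_Ici] at hk; omega
  simpa using partialMax_le_add (K := 0) (Y := Y) (Y' := Y) ha hk
    fun i hi hik => ⟨i, hi, hik.trans hkl, by simp⟩

lemma partialMax_nonneg (ha : 0 < a) (hY : ∀ i, 0 ≤ Y i) (k : ℕ) : 0 ≤ partialMax a Y k := by
  rcases Nat.eq_zero_or_pos k with rfl | hk
  · simp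
  · exact nonneg_of_mul_nonneg_right ((hY 1).trans (le_mul_partialMax ha le_rfl hk)) ha

lemma monotone_partialMax (ha : 0 < a) (hY : ∀ i, 0 ≤ Y i) : Monotone (partialMax a Y) := by
  intro k l hkl
  rcases Nat.eq_zero_or_pos k with rfl | hk
  · simpa using partialMax_nonneg ha hY l
  · exact monotoneOn_partialMax ha hk (hk.trans_le hkl) hkl

end partialMax

section weight

variable (q : ℕ) (φ : ℕ → ℝ)

lemma wt_eq_sup' (x : ℝ) :
    wt (phiPlusFin q φ) (phiMinusFin q φ) x =
      (Finset.range (q + 1)).sup' (Finset.nonempty_range_iff.mpr (Nat.succ_ne_zero q))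
        fun j => max (φ j * x) 0 := by
  rcases lt_trichotomy x 0 with hx | rfl | hx
  · rw [wt, if_neg hx.not_gt, if_pos hx, abs_of_neg hx, phiMinusFin, Finset.mul₀_sup' (by linarith)]
    congr 1
    ext j
    rw [mul_max_of_nonneg _ _ (by linarith), mul_zero, neg_mul_neg, mul_comm]
  · simp [wt]
  · rw [wt, if_pos hx, abs_of_pos hx, phiPlusFin, Finset.mul₀_sup' hx.le]
    congr 1
    ext j
    rw [mul_max_of_nonneg _ _ hx.le, mul_zero, mul_comm]

lemma mul_le_wt {j : ℕ} (hj : j ∈ Finset.range (q + 1)) (x : ℝ) :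
    φ j * x ≤ wt (phiPlusFin q φ) (phiMinusFin q φ) x := by
  rw [wt_eq_sup']
  exact (le_max_left _ _).trans (Finset.le_sup' (fun j => max (φ j * x) 0) hj)

lemma wt_nonneg (x : ℝ) : 0 ≤ wt (phiPlusFin q φ) (phiMinusFin q φ) x := by
  rw [wt_eq_sup']
  exact (le_max_right _ _).trans
    (Finset.le_sup' (fun j => max (φ j * x) 0) (Finset.self_mem_range_succ q))

lemma wt_le_sum_abs_mul (x : ℝ) :
    wt (phiPlusFin q φ) (phiMinusFin q φ) x ≤ (∑ j ∈ Finset.range (q + 1), |φ j|) * |x| := by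
  rw [wt_eq_sup']
  refine Finset.sup'_le _ _ fun j hj => max_le ?_ (by positivity)
  calc φ j * x ≤ |φ j| * |x| := by rw [← abs_mul]; exact le_abs_self _
    _ ≤ _ := by gcongr; exact Finset.single_le_sum (fun i _ => abs_nonneg (φ i)) hj

lemma exists_wt_eq (x : ℝ) : ∃ j ∈ Finset.range (q + 1),
    wt (phiPlusFin q φ) (phiMinusFin q φ) x = max (φ j * x) 0 := by
  obtain ⟨j, hj, h⟩ := Finset.exists_mem_eq_sup'
    (Finset.nonempty_range_iff.mpr (Nat.succ_ne_zero q)) fun j => max (φ j * x) 0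
  exact ⟨j, hj, (wt_eq_sup' q φ x).trans h⟩

end weight

def movAvg (q : ℕ) (φ : ℕ → ℝ) (z : ℤ → ℝ) (i : ℤ) : ℝ :=
  ∑ j ∈ Finset.range (q + 1), φ j * z (i - j)

def IsolatedExceedances (q n : ℕ) (T : ℝ) (z : ℤ → ℝ) : Prop :=
  (∀ i ∈ Finset.Icc (1 - q : ℤ) n, ∀ d ∈ Finset.Icc (1 : ℤ) q, |z i| ≤ T ∨ |z (i + d)| ≤ T) ∧
    ∀ i ∈ Finset.Icc (1 - q : ℤ) 0 ∪ Finset.Ioc ((n : ℤ) - q) n, |z i| ≤ T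

section realization

variable {q n : ℕ} {φ : ℕ → ℝ} {z : ℤ → ℝ} {T : ℝ}

lemma abs_movAvg_sub_le (hT : 0 ≤ T) {i : ℤ} {j₀ : ℕ} (hj₀ : j₀ ∈ Finset.range (q + 1))
    (hsmall : ∀ j ∈ Finset.range (q + 1), j ≠ j₀ → |z (i - j)| ≤ T) :
    |movAvg q φ z i - φ j₀ * z (i - j₀)| ≤ (∑ j ∈ Finset.range (q + 1), |φ j|) * T := by
  rw [movAvg, ← Finset.sum_erase_eq_sub hj₀, Finset.sum_mul]
  refine (Finset.abs_sum_le_sum_abs _ _).trans ?_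
  refine (Finset.sum_le_sum fun j hj => ?_).trans
    (Finset.sum_le_sum_of_subset_of_nonneg (Finset.erase_subset _ _) fun j _ _ => by positivity)
  rw [abs_mul]
  exact mul_le_mul_of_nonneg_left (hsmall j (Finset.mem_of_mem_erase hj)
    (Finset.ne_of_mem_erase hj)) (abs_nonneg _)

namespace IsolatedExceedances

lemma abs_le_of_near (h : IsolatedExceedances q n T z) {i m : ℤ} (hi : 1 - q ≤ i) (hin : i ≤ n)
    (hm : 1 - q ≤ m) (hmn : m ≤ n) (hne : i ≠ m) (him : i ≤ m + q) (hmi : m ≤ i + q)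
    (hbig : T < |z m|) : |z i| ≤ T := by
  rcases hne.lt_or_gt with hlt | hgt
  · have := h.1 i (Finset.mem_Icc.2 ⟨hi, hin⟩) (m - i) (Finset.mem_Icc.2 ⟨by omega, by omega⟩)
    rw [add_sub_cancel] at this
    exact this.resolve_right hbig.not_ge
  · have := h.1 m (Finset.mem_Icc.2 ⟨hm, hmn⟩) (i - m) (Finset.mem_Icc.2 ⟨by omega, by omega⟩)
    rw [add_sub_cancel] at this
    exact this.resolve_left hbig.not_ge

lemma abs_le_of_le_zero (h : IsolatedExceedances q n T z) {i : ℤ} (hi : 1 - q ≤ i)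
    (hi0 : i ≤ 0) : |z i| ≤ T :=
  h.2 i (Finset.mem_union_left _ (Finset.mem_Icc.2 ⟨hi, hi0⟩))

lemma abs_le_of_sub_lt (h : IsolatedExceedances q n T z) {i : ℤ} (hi : (n : ℤ) - q < i)
    (hin : i ≤ n) : |z i| ≤ T :=
  h.2 i (Finset.mem_union_right _ (Finset.mem_Ioc.2 ⟨hi, hin⟩))

lemma exists_single_large (h : IsolatedExceedances q n T z) {i : ℕ} (hi : 1 ≤ i)
    (hin : i ≤ n) : ∃ j₀ ∈ Finset.range (q + 1), j₀ < i ∧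
      ∀ j ∈ Finset.range (q + 1), j ≠ j₀ → |z ((i : ℤ) - j)| ≤ T := by
  by_cases! hsmall : ∀ j ∈ Finset.range (q + 1), |z ((i : ℤ) - j)| ≤ T
  · exact ⟨0, by simp, hi, fun j hj _ => hsmall j hj⟩
  obtain ⟨j₀, hj₀, hlarge⟩ := hsmall
  have hj₀q := Finset.mem_range.1 hj₀
  have hj₀i : j₀ < i := by
    by_contra! hle
    exact (h.abs_le_of_le_zero (by omega) (by omega)).not_gt hlarge
  refine ⟨j₀, hj₀, hj₀i, fun j hj hne => ?_⟩
  have hjq := Finset.mem_range.1 hj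
  exact h.abs_le_of_near (by omega) (by omega) (by omega) (by omega) (by omega) (by omega)
    (by omega) hlarge

lemma movAvg_le_wt (h : IsolatedExceedances q n T z) (hT : 0 ≤ T) {i : ℕ} (hi : 1 ≤ i)
    (hin : i ≤ n) : ∃ m, 1 ≤ m ∧ m ≤ i ∧ movAvg q φ z i ≤
      wt (phiPlusFin q φ) (phiMinusFin q φ) (z m) + (∑ j ∈ Finset.range (q + 1), |φ j|) * T := by
  obtain ⟨j₀, hj₀, hj₀i, hsmall⟩ := h.exists_single_large hi hin
  refine ⟨i - j₀, by omega, by omega, ?_⟩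
  have hcast : ((i - j₀ : ℕ) : ℤ) = i - j₀ := by push_cast [hj₀i.le]; ring
  rw [hcast]
  linarith [(abs_le.1 (abs_movAvg_sub_le (φ := φ) hT hj₀ hsmall)).2, mul_le_wt q φ hj₀ (z (i - j₀))]

lemma wt_le_movAvg (h : IsolatedExceedances q n T z) (hT : 0 ≤ T) (hx₁ : -T ≤ movAvg q φ z 1)
    (hn : 1 ≤ n) {i : ℕ} (hi : 1 ≤ i) (hin : i ≤ n) :
    ∃ m, 1 ≤ m ∧ m ≤ i + q ∧ m ≤ n ∧ wt (phiPlusFin q φ) (phiMinusFin q φ) (z i) ≤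
      movAvg q φ z m + ((∑ j ∈ Finset.range (q + 1), |φ j|) + 1) * T := by
  set S := ∑ j ∈ Finset.range (q + 1), |φ j|
  have hS : 0 ≤ S := by positivity
  have hfallback : ∀ v ≤ S * T, ∃ m, 1 ≤ m ∧ m ≤ i + q ∧ m ≤ n ∧ v ≤ movAvg q φ z m + (S + 1) * T :=
    fun v hv => ⟨1, le_rfl, by omega, hn, by push_cast; linarith⟩
  by_cases! hsmall : |z i| ≤ T
  · exact hfallback _ ((wt_le_sum_abs_mul q φ _).trans (mul_le_mul_of_nonneg_left hsmall hS))
  obtain ⟨js, hjs, hwt⟩ := exists_wt_eq q φ (z i)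
  rw [hwt]
  rcases le_total (φ js * z i) 0 with hneg | hpos
  · exact hfallback _ (by rw [max_eq_right hneg]; positivity)
  rw [max_eq_left hpos]
  have hjsq := Finset.mem_range.1 hjs
  have hiq : i + q ≤ n := by
    by_contra! hlt
    exact (h.abs_le_of_sub_lt (by omega) (by omega)).not_gt hsmall
  refine ⟨i + js, by omega, by omega, by omega, ?_⟩
  have hothers : ∀ j ∈ Finset.range (q + 1), j ≠ js → |z (((i + js : ℕ) : ℤ) - j)| ≤ T := by
    intro j hj hne
    have hjq := Finset.mem_range.1 hj
    exact h.abs_le_of_near (by omega) (by omega) (by omega) (by omega) (by omega) (by omega)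
      (by omega) hsmall
  have := (abs_le.1 (abs_movAvg_sub_le (φ := φ) hT hjs hothers)).1
  push_cast at this ⊢
  rw [add_sub_cancel_right] at this
  linarith

lemma dM2_maxProc_le (h : IsolatedExceedances q n T z) (hn : 0 < n) {a : ℝ} (ha : 0 < a)
    (hT : 0 ≤ T) (hx₁ : -T ≤ movAvg q φ z 1) :
    dM2 (maxProc a (fun i => wt (phiPlusFin q φ) (phiMinusFin q φ) (z i)) n)
        (maxProc a (fun i => movAvg q φ z i) n) ≤
      max (((∑ j ∈ Finset.range (q + 1), |φ j|) + 1) * T / a) ((q + 1) / n) := by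
  set S := ∑ j ∈ Finset.range (q + 1), |φ j|
  set F := partialMax a fun i => wt (phiPlusFin q φ) (phiMinusFin q φ) (z i)
  set G := partialMax a fun i => movAvg q φ z i
  have hC : 0 ≤ (S + 1) * T / a := by positivity
  have hGlb : ∀ k, -((S + 1) * T / a) ≤ G k := by
    intro k
    rcases Nat.eq_zero_or_pos k with rfl | hk
    · simpa [G] using hC
    have h₁ : movAvg q φ z 1 ≤ a * G k :=
      le_mul_partialMax (Y := fun i => movAvg q φ z i) ha le_rfl hk
    rw [neg_le, le_div_iff₀ ha]
    nlinarith [mul_nonneg (by positivity : (0:ℝ) ≤ S) hT]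
  have hGF : ∀ k ≤ n, G k ≤ F k + (S + 1) * T / a := by
    intro k hkn
    rcases Nat.eq_zero_or_pos k with rfl | hk
    · simpa [F, G] using hC
    refine partialMax_le_add ha hk.ne' fun i hi hik => ?_
    obtain ⟨m, hm, hmi, hle⟩ := h.movAvg_le_wt hT hi (hik.trans hkn)
    exact ⟨m, hm, hmi.trans hik, by linarith⟩
  have hFG : ∀ k ≤ n, F k ≤ G (min (k + q) n) + (S + 1) * T / a := by
    intro k hkn
    rcases Nat.eq_zero_or_pos k with rfl | hk
    · simpa [F, ← neg_le_iff_add_nonneg] using hGlb (min q n)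
    refine partialMax_le_add ha hk.ne' fun i hi hik => ?_
    obtain ⟨m, hm, hmi, hmn, hle⟩ := h.wt_le_movAvg hT hx₁ hn hi (hik.trans hkn)
    exact ⟨m, hm, le_min (by omega) hmn, hle⟩
  rw [maxProc_eq_partialMax, maxProc_eq_partialMax]
  exact dM2_comp_floor_le hn q hC partialMax_zero (monotone_partialMax ha fun i => wt_nonneg q φ _)
    (monotoneOn_partialMax ha) hGlb hGF hFG

end IsolatedExceedances

end realization

lemma tendsto_zero_of_tendsto_natCast_mul {u : ℕ → ℝ} {L : ℝ}
    (h : Tendsto (fun n : ℕ => n * u n) atTop (𝓝 L)) : Tendsto u atTop (𝓝 0) := by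
  have := h.mul (tendsto_one_div_atTop_nhds_zero_nat (𝕜 := ℝ))
  rw [mul_zero] at this
  refine this.congr' ?_
  filter_upwards [eventually_ne_atTop 0] with n hn
  field_simp

lemma tendsto_natCast_mul_sq_of_tendsto_natCast_mul {u : ℕ → ℝ} {L : ℝ}
    (h : Tendsto (fun n : ℕ => n * u n) atTop (𝓝 L)) :
    Tendsto (fun n : ℕ => n * u n ^ 2) atTop (𝓝 0) := by
  have := h.mul (tendsto_zero_of_tendsto_natCast_mul h)
  rw [mul_zero] at this
  exact this.congr fun n => by ring

section probability

variable {Ω : Type*} [MeasurableSpace Ω] {P : Measure Ω} [IsProbabilityMeasure P]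

lemma tendsto_measure_zero_of_subset {E B : ℕ → Set Ω} (hEB : ∀ᶠ n in atTop, E n ⊆ B n)
    (hB : Tendsto (fun n => P.real (B n)) atTop (𝓝 0)) :
    Tendsto (fun n => P (E n)) atTop (𝓝 0) := by
  rw [← ENNReal.tendsto_toReal_iff (fun n => measure_ne_top P _) ENNReal.zero_ne_top,
    ENNReal.toReal_zero]
  refine tendsto_of_tendsto_of_tendsto_of_le_of_le' tendsto_const_nhds hB
    (Eventually.of_forall fun n => ENNReal.toReal_nonneg) ?_
  filter_upwards [hEB] with n hn
  exact measureReal_mono hn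

lemma tendsto_measureReal_lt_neg {X : Ω → ℝ} (hX : Measurable X) {b : ℕ → ℝ}
    (hb : Tendsto b atTop atTop) : Tendsto (fun n => P.real {ω | X ω < -b n}) atTop (𝓝 0) := by
  have := Measure.isProbabilityMeasure_map (μ := P) hX.aemeasurable
  have hcdf := (tendsto_cdf_atBot (P.map X)).comp (tendsto_neg_atTop_atBot.comp hb)
  refine tendsto_of_tendsto_of_tendsto_of_le_of_le tendsto_const_nhds hcdf
    (fun n => measureReal_nonneg) fun n => ?_
  rw [Function.comp_apply, Function.comp_apply, cdf_eq_real,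
    map_measureReal_apply hX measurableSet_Iic]
  exact measureReal_mono fun ω (hω : X ω < -b n) => hω.le

variable {Z : Ω → ℝ} {α : ℝ} {a : ℕ → ℝ}

lemma tendsto_atTop_of_normSeq (hrv : RegVarAbs P Z α) (ha : NormSeq P Z a) :
    Tendsto a atTop atTop := by
  obtain ⟨-, L, ⟨hLpos, -⟩, htail⟩ := hrv
  have hsmall := tendsto_zero_of_tendsto_natCast_mul ha.2
  refine tendsto_atTop.2 fun M => ?_
  obtain ⟨x₁, hx₁⟩ := eventually_atTop.1 hLpos
  set x₀ := max (max M x₁) 1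
  have hx₀ : 0 < x₀ := lt_of_lt_of_le one_pos (le_max_right _ _)
  have htail₀ : 0 < P.real {ω | x₀ < |Z ω|} := by
    rw [measureReal_def, htail x₀ hx₀]
    exact mul_pos (Real.rpow_pos_of_pos hx₀ _) (hx₁ x₀ ((le_max_right _ _).trans (le_max_left _ _)))
  filter_upwards [hsmall.eventually_lt_const htail₀] with n hn
  by_contra! hlt
  refine hn.not_ge (measureReal_mono fun ω (hω : x₀ < |Z ω|) => ?_)
  exact lt_of_le_of_lt (hlt.le.trans ((le_max_left _ _).trans (le_max_left _ _))) hω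

lemma tendsto_natCast_mul_tail (hrv : RegVarAbs P Z α) (ha : NormSeq P Z a) {c : ℝ} (hc : 0 < c) :
    Tendsto (fun n : ℕ => n * P.real {ω | c * a n < |Z ω|}) atTop (𝓝 (c ^ (-α))) := by
  have hatop := tendsto_atTop_of_normSeq hrv ha
  obtain ⟨-, L, ⟨hLpos, hLratio⟩, htail⟩ := hrv
  have := ha.2.mul (tendsto_const_nhds.mul ((hLratio c hc).comp hatop) : Tendsto
    (fun n => c ^ (-α) * (L (c * a n) / L (a n))) atTop (𝓝 (c ^ (-α) * 1)))
  rw [one_mul, mul_one] at this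
  refine this.congr' ?_
  filter_upwards [hatop.eventually hLpos] with n hn
  have han := ha.1 n
  simp only [measureReal_def, htail _ han, htail _ (mul_pos hc han),
    Real.mul_rpow hc.le han.le]
  field_simp

end probability

section iid

variable {Ω ι : Type*} [MeasurableSpace Ω] {P : Measure Ω} {Z : ι → Ω → ℝ}

lemma measurableSet_lt_abs (T : ℝ) : MeasurableSet {x : ℝ | T < |x|} :=
  measurableSet_lt measurable_const measurable_abs

lemma IID.measureReal_tail_eq (hiid : IID P Z) (i j : ι) (T : ℝ) :
    P.real {ω | T < |Z i ω|} = P.real {ω | T < |Z j ω|} := by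
  have h := congrArg (fun μ : Measure ℝ => μ.real {x | T < |x|}) (hiid.2.2 i j)
  simp only [map_measureReal_apply (hiid.1 _) (measurableSet_lt_abs T)] at h
  exact h

lemma IID.measureReal_tail_inter (hiid : IID P Z) {i j : ι} (hij : i ≠ j) (T : ℝ) :
    P.real ({ω | T < |Z i ω|} ∩ {ω | T < |Z j ω|}) =
      P.real {ω | T < |Z i ω|} * P.real {ω | T < |Z j ω|} := by
  simp only [measureReal_def, ← ENNReal.toReal_mul]
  exact congrArg ENNReal.toReal ((hiid.2.1.indepFun hij).measure_inter_preimage_eq_mul _ _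
    (measurableSet_lt_abs T) (measurableSet_lt_abs T))

end iid

lemma IID.measureReal_not_isolatedExceedances_le {Ω : Type*} [MeasurableSpace Ω]
    {P : Measure Ω} [IsFiniteMeasure P] {Z : ℤ → Ω → ℝ} (hiid : IID P Z)
    (q n : ℕ) (T : ℝ) :
    P.real {ω | ¬IsolatedExceedances q n T fun i => Z i ω} ≤
      (n + q) * q * P.real {ω | T < |Z 0 ω|} ^ 2 + 2 * q * P.real {ω | T < |Z 0 ω|} := by
  set p := P.real {ω | T < |Z 0 ω|}
  set pairs := Finset.Icc (1 - q : ℤ) n ×ˢ Finset.Icc (1 : ℤ) q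
  set edge := Finset.Icc (1 - q : ℤ) 0 ∪ Finset.Ioc ((n : ℤ) - q) n
  have hsub : {ω | ¬IsolatedExceedances q n T fun i => Z i ω} ⊆
      (⋃ id ∈ pairs, {ω | T < |Z id.1 ω|} ∩ {ω | T < |Z (id.1 + id.2) ω|}) ∪
        ⋃ i ∈ edge, {ω | T < |Z i ω|} := by
    intro ω hω
    simp only [IsolatedExceedances, not_and_or, not_forall, not_or, not_le] at hω
    rcases hω with ⟨i, hi, d, hd, hbig⟩ | ⟨i, hi, hbig⟩
    · exact Or.inl (mem_iUnion₂.2 ⟨(i, d), Finset.mem_product.2 ⟨hi, hd⟩, hbig⟩)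
    · exact Or.inr (mem_biUnion hi hbig)
  have hpairs : ∑ id ∈ pairs, P.real ({ω | T < |Z id.1 ω|} ∩ {ω | T < |Z (id.1 + id.2) ω|}) =
      (n + q) * q * p ^ 2 := by
    rw [Finset.sum_congr rfl fun id hid => by
      have hd := (Finset.mem_Icc.1 (Finset.mem_product.1 hid).2).1
      rw [hiid.measureReal_tail_inter (show id.1 ≠ id.1 + id.2 by omega),
        hiid.measureReal_tail_eq _ 0 T, hiid.measureReal_tail_eq (id.1 + id.2) 0 T, ← sq]]
    simp only [Finset.sum_const, nsmul_eq_mul, pairs, Finset.card_product, Int.card_Icc]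
    push_cast
    rw [show ((n : ℤ) + 1 - (1 - q)).toNat = n + q by omega,
      show ((q : ℤ) + 1 - 1).toNat = q by omega]
    push_cast; ring
  have hedge : ∑ i ∈ edge, P.real {ω | T < |Z i ω|} ≤ 2 * q * p := by
    rw [Finset.sum_congr rfl fun i _ => hiid.measureReal_tail_eq i 0 T, Finset.sum_const,
      nsmul_eq_mul]
    have : (edge.card : ℝ) ≤ 2 * q := by
      have := Finset.card_union_le (Finset.Icc (1 - q : ℤ) 0) (Finset.Ioc ((n : ℤ) - q) n)
      rw [Int.card_Icc, Int.card_Ioc] at this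
      exact_mod_cast (show edge.card ≤ 2 * q from this.trans (by omega))
    exact mul_le_mul_of_nonneg_right this measureReal_nonneg
  calc _ ≤ _ := measureReal_mono hsub
    _ ≤ _ := measureReal_union_le _ _
    _ ≤ _ := add_le_add (measureReal_biUnion_finset_le _ _) (measureReal_biUnion_finset_le _ _)
    _ ≤ _ := by rw [hpairs]; gcongr

lemma IID.tendsto_measureReal_not_isolatedExceedances_union {Ω : Type*} [MeasurableSpace Ω]
    {P : Measure Ω} [IsProbabilityMeasure P] {Z : ℤ → Ω → ℝ} {α : ℝ} {a : ℕ → ℝ}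
    (hiid : IID P Z) (hrv : RegVarAbs P (Z 0) α) (ha : NormSeq P (Z 0) a) (q : ℕ) {ε : ℝ}
    (hε : 0 < ε) {X : Ω → ℝ} (hX : Measurable X) :
    Tendsto (fun n => P.real ({ω | ¬IsolatedExceedances q n (ε * a n) fun i => Z i ω} ∪
      {ω | X ω < -(ε * a n)})) atTop (𝓝 0) := by
  set p := fun n : ℕ => P.real {ω | ε * a n < |Z 0 ω|}
  have hp := tendsto_natCast_mul_tail hrv ha hε
  have hp0 := tendsto_zero_of_tendsto_natCast_mul hp
  have hbound : Tendsto (fun n : ℕ => q * (n * p n ^ 2) + q ^ 2 * p n ^ 2 + 2 * q * p n +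
      P.real {ω | X ω < -(ε * a n)}) atTop (𝓝 0) := by
    simpa using ((((tendsto_natCast_mul_sq_of_tendsto_natCast_mul hp).const_mul (q : ℝ)).add
      ((hp0.pow 2).const_mul _)).add (hp0.const_mul _)).add
      (tendsto_measureReal_lt_neg hX ((tendsto_atTop_of_normSeq hrv ha).const_mul_atTop hε))
  refine tendsto_of_tendsto_of_tendsto_of_le_of_le tendsto_const_nhds hbound
    (fun n => measureReal_nonneg) fun n => (measureReal_union_le _ _).trans ?_
  have := hiid.measureReal_not_isolatedExceedances_le q n (ε * a n)
  linarith

theorem max_process_M2_approximation_general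
    {Ω : Type} [MeasurableSpace Ω] (P : Measure Ω) [IsProbabilityMeasure P]
    (Z : ℤ → Ω → ℝ) (α : ℝ)
    (hiid : IID P Z) (hrv : RegVarAbs P (Z 0) α)
    (a : ℕ → ℝ) (ha : NormSeq P (Z 0) a)
    (q : ℕ) (φ : ℕ → ℝ)
    (δ : ℝ) (hδ : 0 < δ) :
    Filter.Tendsto
      (fun n => P {ω | δ < dM2
        (fun t => maxProc (a n)
          (fun i => wt (phiPlusFin q φ) (phiMinusFin q φ) (Z (i : ℤ) ω)) n t)
        (fun t => maxProc (a n)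
          (fun i => ∑ j ∈ Finset.range (q+1), φ j * Z ((i : ℤ) - j) ω) n t)})
      atTop (𝓝 0) := by
  set S := ∑ j ∈ Finset.range (q + 1), |φ j|
  set ε := δ / (S + 1)
  have hε : 0 < ε := by positivity
  set X₁ : Ω → ℝ := fun ω => movAvg q φ (fun i => Z i ω) 1
  have hX₁ : Measurable X₁ := Finset.measurable_sum _ fun j _ => (hiid.1 _).const_mul _
  refine tendsto_measure_zero_of_subset ?_
    (hiid.tendsto_measureReal_not_isolatedExceedances_union hrv ha q hε hX₁)
  filter_upwards [eventually_gt_atTop 0,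
    (tendsto_const_div_atTop_nhds_zero_nat ((q : ℝ) + 1)).eventually_le_const hδ]
    with n hn hqn ω (hω : δ < _)
  by_contra hω'
  have hiso : IsolatedExceedances q n (ε * a n) fun i => Z i ω :=
    by_contra fun h => hω' (Or.inl h)
  have hx₁ : -(ε * a n) ≤ X₁ ω := not_lt.1 fun h => hω' (Or.inr h)
  have hC : (S + 1) * (ε * a n) / a n = δ := by
    rw [mul_div_assoc, mul_div_cancel_right₀ _ (ha.1 n).ne']
    exact mul_div_cancel₀ δ (by positivity)
  refine (not_lt.2 ?_) hω
  refine (hiso.dM2_maxProc_le hn (ha.1 n) (mul_pos hε (ha.1 n)).le hx₁).trans ?_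
  rw [hC]
  exact max_le le_rfl hqn

/-- For the finite order moving average `Xᵢ = Σ_{j=0}^q φⱼ Z_{i-j}`,
the maxima process `Wₙ` and its i.i.d. approximation `Wₙ^Z` are close in the `M₂` metric:
`P(d_{M₂}(Wₙ^Z, Wₙ) > δ) → 0` for every `δ > 0`. -/
theorem max_process_M2_approximation
    {Ω : Type} [MeasurableSpace Ω] (P : Measure Ω) [IsProbabilityMeasure P]
    (Z : ℤ → Ω → ℝ) (α : ℝ) (hα : 0 < α) (hα2 : α < 2)
    (hiid : IID P Z) (hrv : RegVarAbs P (Z 0) α)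
    (a : ℕ → ℝ) (ha : NormSeq P (Z 0) a)
    (q : ℕ) (φ : ℕ → ℝ)
    (β : ℝ) (hβdef : β = ∑ i ∈ Finset.range (q+1), φ i) (hβ : 0 < β)
    (hcoef : ∀ s : ℕ, s ≤ q → 0 ≤ (∑ i ∈ Finset.range (s+1), φ i) / β ∧
      (∑ i ∈ Finset.range (s+1), φ i) / β ≤ 1)
    (δ : ℝ) (hδ : 0 < δ) :
    Filter.Tendsto
      (fun n => P {ω | δ < dM2
        (fun t => maxProc (a n)
          (fun i => wt (phiPlusFin q φ) (phiMinusFin q φ) (Z (i : ℤ) ω)) n t)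
        (fun t => maxProc (a n)
          (fun i => ∑ j ∈ Finset.range (q+1), φ j * Z ((i : ℤ) - j) ω) n t)})
      atTop (𝓝 0) :=
  max_process_M2_approximation_general P Z α hiid hrv a ha q φ δ hδ

end LinProc
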